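/- Define h(n) = 0!·1!·⋯·(n-1)!. For all nonnegative integers n, a, b with a + b = n, the telescoping identity holds: ∏_{i=1}^{a} [(a-i)!·(n+b+i)!]/[(b+i-1)!·(n+a+1-i)!] = [h(a)·h(b)·h(2n+1)·h(n+1)]/[h(n)·h(n+a+1)·h(n+b+1)]. -/

import Mathlib

open Nat

/-- The hyperfactorial h(n) = 0!·1!·⋯·(n-1)!. -/
def hyp (n : ℕ) : ℕ := ∏ i ∈ Finset.range n, i !

lemma hyp_succ (n : ℕ) : hyp (n + 1) = hyp n * n ! := Finset.prod_range_succ _ _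

lemma hyp_ne (n : ℕ) : (hyp n : ℚ) ≠ 0 := by
  have : 0 < hyp n := Finset.prod_pos fun i _ => i.factorial_pos
  exact_mod_cast this.ne'

lemma fact_ne (n : ℕ) : ((n ! : ℕ) : ℚ) ≠ 0 := by
  exact_mod_cast (Nat.factorial_pos n).ne'

lemma prod_Icc_one (f : ℕ → ℚ) (a : ℕ) :
    ∏ i ∈ Finset.Icc 1 a, f i = ∏ i ∈ Finset.range a, f (1 + i) := by
  rw [← Finset.Ico_add_one_right_eq_Icc, Finset.prod_Ico_eq_prod_range]
  simp

/-- The telescoping product evaluation underlying equation (4.6) in the proof of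
Theorem 2.2. -/
theorem stmt_11 (n a b : ℕ) (hab : a + b = n) :
    ∏ i ∈ Finset.Icc 1 a,
        (((a - i)! * (n + b + i)! : ℚ) / ((b + i - 1)! * (n + a + 1 - i)!))
      = (hyp a * hyp b * hyp (2 * n + 1) * hyp (n + 1) : ℚ) /
          (hyp n * hyp (n + a + 1) * hyp (n + b + 1)) := by
  induction a generalizing b with
  | zero =>
      obtain rfl : b = n := by omega
      have h1 : 2 * b + 1 = b + b + 1 := by ring
      have h0 : hyp 0 = 1 := rfl
      have n1 := hyp_ne b
      have n2 := hyp_ne (b + 1)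
      have n3 := hyp_ne (b + b + 1)
      simp only [h1, h0, Nat.cast_one, one_mul, Nat.add_zero, Nat.zero_add,
        show Finset.Icc 1 0 = (∅ : Finset ℕ) from rfl, Finset.prod_empty]
      field_simp
  | succ a ih =>
      have IH := ih (b + 1) (by omega)
      rw [prod_Icc_one] at IH ⊢
      rw [Finset.prod_range_succ']
      have hterm : ∀ i ∈ Finset.range a,
          ((a + 1 - (1 + (i + 1)))! * (n + b + (1 + (i + 1)))! : ℚ) /
            ((b + (1 + (i + 1)) - 1)! * (n + (a + 1) + 1 - (1 + (i + 1)))!)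
          = ((a - (1 + i))! * (n + (b + 1) + (1 + i))! : ℚ) /
            (((b + 1) + (1 + i) - 1)! * (n + a + 1 - (1 + i))!) := by
        intro i _
        have e1 : a + 1 - (1 + (i + 1)) = a - (1 + i) := by omega
        have e2 : n + b + (1 + (i + 1)) = n + (b + 1) + (1 + i) := by omega
        have e3 : b + (1 + (i + 1)) - 1 = (b + 1) + (1 + i) - 1 := by omega
        have e4 : n + (a + 1) + 1 - (1 + (i + 1)) = n + a + 1 - (1 + i) := by omega
        rw [e1, e2, e3, e4]
      rw [Finset.prod_congr rfl hterm, IH]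
      -- now pure algebra
      have e1 : a + 1 - (1 + 0) = a := by omega
      have e2 : n + b + (1 + 0) = n + b + 1 := by omega
      have e3 : b + (1 + 0) - 1 = b := by omega
      have e4 : n + (a + 1) + 1 - (1 + 0) = n + a + 1 := by omega
      rw [e1, e2, e3, e4]
      have e5 : n + (a + 1) + 1 = (n + a + 1) + 1 := by omega
      have e6 : n + (b + 1) + 1 = (n + b + 1) + 1 := by omega
      rw [e5, e6, hyp_succ (n + a + 1), hyp_succ (n + b + 1), hyp_succ a, hyp_succ b]
      have n1 := hyp_ne n
      have n2 := hyp_ne (n + a + 1)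
      have n3 := hyp_ne (n + b + 1)
      have f1 := fact_ne b
      have f2 := fact_ne (n + b + 1)
      have f3 := fact_ne (n + a + 1)
      push_cast
      field_simp
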